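/- arXiv:2112.11813 — 5 statements merged into one kernel-verified Lean document; each statement's English description precedes it below -/
import Mathlib

section
/- For a sequence (x_n) in [0,1] and 0 ≤ β ≤ 1, the integral I_β(s,N) = ∫₀¹ F_β(t,s,N)² dt satisfies the identity I_β(s,N) = (1/s)∫₀ˢ R₂(β;σ,N) dσ · s + s/N^{1−β}; equivalently, ∫₀¹ F_β(t,s,N)² dt = s·N^{β−2} Σ_{m≠n≤N} {1 − ‖x_n−x_m‖·N^β/s}⁺ + s·N^{β−1}, where {x}⁺ = max(x,0). -/
open Finset Filter MeasureTheory
open scoped Classical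

/-- Distance to the nearest integer. -/
noncomputable def nd (x : ℝ) : ℝ := |x - round x|

/-- Signed distance to the nearest integer: `{x}` if `{x} ≤ 1/2`, else `{x} - 1`. -/
noncomputable def sd (x : ℝ) : ℝ :=
  if Int.fract x ≤ 1/2 then Int.fract x else Int.fract x - 1

/-- Number of pairs `m ≠ n ≤ N` with `‖x_m - x_n‖ ≤ r`. -/
noncomputable def pairCount (x : ℕ → ℝ) (N : ℕ) (r : ℝ) : ℕ :=
  ((Finset.Icc 1 N ×ˢ Finset.Icc 1 N).filter
    (fun p => p.1 ≠ p.2 ∧ nd (x p.1 - x p.2) ≤ r)).card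

/-- The pair correlation function with parameter `β`. -/
noncomputable def R2 (x : ℕ → ℝ) (β s : ℝ) (N : ℕ) : ℝ :=
  (pairCount x N (s / (N : ℝ) ^ β) : ℝ) / (N : ℝ) ^ (2 - β)

/-- `F_β(t,s,N) = N^{β-1} · #{n ≤ N : ‖x_n - t‖ ≤ s/(2N^β)}`. -/
noncomputable def Fb (x : ℕ → ℝ) (β t s : ℝ) (N : ℕ) : ℝ :=
  (((Finset.Icc 1 N).filter (fun n => nd (x n - t) ≤ s / (2 * (N : ℝ) ^ β))).card : ℝ)
    / (N : ℝ) ^ (1 - β)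

/-- Uniform distribution modulo 1 of a sequence in `[0,1]`. -/
def UnifDist (x : ℕ → ℝ) : Prop :=
  ∀ a b : ℝ, 0 ≤ a → a < b → b ≤ 1 →
    Tendsto (fun N : ℕ =>
      (((Finset.Icc 1 N).filter (fun i => x i ∈ Set.Icc a b)).card : ℝ) / N)
      atTop (nhds (b - a))

/-- Weak Poissonian pair correlations with parameter `γ` (for `γ = 0`, only scales
`s ≤ 1/2` are required). -/
def PPC (x : ℕ → ℝ) (γ : ℝ) : Prop :=
  ∀ s : ℝ, 0 < s → (γ = 0 → s ≤ 1/2) →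
    Tendsto (fun N => R2 x γ s N) atTop (nhds (2 * s))

/-!
With `r = s / (2 N^β)`, expanding the square gives
`F_β(t,s,N)² = N^{2β-2} ∑_{m,n ≤ N} 1_{B(x_m,r)}(t) 1_{B(x_n,r)}(t)`, and for `r ≤ 1/4`
(which is `2s ≤ N^β`) two arcs of length `2r` on `ℝ/ℤ` overlap in measure `(2r - ‖x_m - x_n‖)⁺`.
The `N` diagonal terms contribute `N · 2r`, which is the term `s N^{β-1}`.
-/

lemma measurable_nd : Measurable nd := by
  have hround : Measurable (fun x : ℝ => (round x : ℝ)) := by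
    simpa only [round_eq, Function.comp_def] using
      (measurable_from_top (α := ℤ)).comp (measurable_id'.add_const (1 / 2 : ℝ)).floor
  exact (measurable_id.sub hround).abs

lemma nd_sub_intCast (x : ℝ) (k : ℤ) : nd (x - k) = nd x := by
  simp only [nd, round_sub_intCast, Int.cast_sub, sub_sub_sub_cancel_right]

lemma nd_zero : nd 0 = 0 := by
  simp [nd]

lemma nd_le_abs (x : ℝ) : nd x ≤ |x| := by
  simpa [nd] using round_le x 0

lemma one_sub_abs_le_nd_of_round_ne_zero {x : ℝ} (h : round x ≠ 0) : 1 - |x| ≤ nd x := by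
  have h1 : (1 : ℝ) ≤ |(round x : ℝ)| := by exact_mod_cast Int.one_le_abs h
  have h2 := abs_sub_abs_le_abs_sub (round x : ℝ) x
  rw [abs_sub_comm] at h2
  exact (by linarith : 1 - |x| ≤ |x - round x|)

lemma nd_eq_abs {x : ℝ} (hx : |x| ≤ 1 / 2) : nd x = |x| := by
  by_cases h : round x = 0
  · simp [nd, h]
  · linarith [nd_le_abs x, one_sub_abs_le_nd_of_round_ne_zero h]

lemma abs_le_of_nd_le {x r : ℝ} (hx : |x| < 1 - r) (h : nd x ≤ r) : |x| ≤ r := by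
  by_cases h0 : round x = 0
  · simpa [nd, h0] using h
  · linarith [one_sub_abs_le_nd_of_round_ne_zero h0]

noncomputable def ballIndicator (r a t : ℝ) : ℝ := if nd (a - t) ≤ r then 1 else 0

lemma periodic_ballIndicator (r a : ℝ) : Function.Periodic (ballIndicator r a) 1 := by
  intro t
  rw [ballIndicator, ballIndicator, ← sub_sub, ← Int.cast_one, nd_sub_intCast]

lemma measurable_ballIndicator (r a : ℝ) : Measurable (ballIndicator r a) :=
  Measurable.ite (measurableSet_le (measurable_nd.comp (measurable_const.sub measurable_id))
    measurable_const) measurable_const measurable_const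

lemma intervalIntegrable_ballIndicator_mul (r a b c d : ℝ) :
    IntervalIntegrable (fun t => ballIndicator r a t * ballIndicator r b t) volume c d := by
  refine (intervalIntegrable_const (c := (1 : ℝ))).mono_fun
    ((measurable_ballIndicator r a).mul (measurable_ballIndicator r b)).aestronglyMeasurable
    (Filter.Eventually.of_forall fun t => ?_)
  simp only [ballIndicator]
  split_ifs <;> norm_num

-- For `r = 1 / 4` the condition also holds at the isolated points `|u| = 1 / 4`, `|c + u| = 3 / 4`.
lemma nd_add_le_and_nd_le_iff {c r u : ℝ} (hc : |c| ≤ 1 / 2) (hr : r ≤ 1 / 4) (hu : |u| ≤ 1 / 2)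
    (hu' : |u| ≠ 1 / 4) :
    nd (c + u) ≤ r ∧ nd u ≤ r ↔ u ∈ Set.Icc (-r) r ∩ Set.Icc (-c - r) (r - c) := by
  simp only [Set.mem_inter_iff, Set.mem_Icc, nd_eq_abs hu]
  constructor
  · rintro ⟨hcu, hur⟩
    have hu4 : |u| < 1 / 4 := lt_of_le_of_ne (hur.trans hr) hu'
    have hcu' := abs_le_of_nd_le (by linarith [abs_add_le c u]) hcu
    rw [abs_le] at hcu' hur
    exact ⟨hur, by linarith, by linarith⟩
  · rintro ⟨hur, h1, h2⟩
    exact ⟨(nd_le_abs _).trans (abs_le.mpr ⟨by linarith, by linarith⟩), abs_le.mpr hur⟩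

lemma integral_overlap_of_abs_le_half {c r : ℝ} (hc : |c| ≤ 1 / 2) (hr : r ≤ 1 / 4) :
    ∫ u in -(1 / 2)..(1 / 2), (if nd (c + u) ≤ r ∧ nd u ≤ r then (1 : ℝ) else 0)
      = max (2 * r - |c|) 0 := by
  set S := Set.Icc (-r) r ∩ Set.Icc (-c - r) (r - c)
  have hS : S ⊆ Set.Ioc (-(1 / 2)) (1 / 2) := fun u hu => by
    simp only [S, Set.mem_inter_iff, Set.mem_Icc] at hu
    constructor <;> linarith
  have hpt : ∀ u ∈ Set.uIoc (-(1 / 2) : ℝ) (1 / 2), |u| ≠ 1 / 4 →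
      (if nd (c + u) ≤ r ∧ nd u ≤ r then (1 : ℝ) else 0) = S.indicator 1 u := by
    intro u hu hu'
    rw [Set.uIoc_of_le (by norm_num)] at hu
    rw [Set.indicator_apply]
    exact if_congr (nd_add_le_and_nd_le_iff hc hr (abs_le.mpr ⟨hu.1.le, hu.2⟩) hu') rfl rfl
  have hnull : ∀ᵐ u ∂volume, u ∉ ({1 / 4, -(1 / 4)} : Set ℝ) :=
    (Set.toFinite _).countable.ae_notMem volume
  have hS_eq : S = Set.Icc (max (-r) (-c - r)) (min r (r - c)) := Set.Icc_inter_Icc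
  rw [intervalIntegral.integral_congr_ae (hnull.mono fun u hu hmem => hpt u hmem fun h => hu ?_),
    intervalIntegral.integral_of_le (by norm_num),
    integral_indicator_one (measurableSet_Icc.inter measurableSet_Icc),
    measureReal_restrict_apply (measurableSet_Icc.inter measurableSet_Icc),
    Set.inter_eq_left.mpr hS, hS_eq, Real.volume_real_Icc]
  · rcases le_total c 0 with h | h
    · rw [abs_of_nonpos h, min_eq_left (show r ≤ r - c by linarith),
        max_eq_right (show -r ≤ -c - r by linarith)]
      ring_nf
    · rw [abs_of_nonneg h, min_eq_right (show r - c ≤ r by linarith),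
        max_eq_left (show -c - r ≤ -r by linarith)]
      ring_nf
  · rcases (abs_eq (by norm_num : (0 : ℝ) ≤ 1 / 4)).mp h with h | h <;> simp [h]

lemma integral_ballIndicator_mul (r a b : ℝ) (hr : r ≤ 1 / 4) :
    ∫ t in (0 : ℝ)..1, ballIndicator r a t * ballIndicator r b t = max (2 * r - nd (a - b)) 0 := by
  set f := fun t => ballIndicator r a t * ballIndicator r b t
  set c := a - b - round (a - b)
  have hf : Function.Periodic f 1 := (periodic_ballIndicator r a).mul (periodic_ballIndicator r b)
  have hshift : ∀ u, f (b - u) = if nd (c + u) ≤ r ∧ nd u ≤ r then 1 else 0 := fun u => by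
    rw [show c + u = a - (b - u) - round (a - b) by ring, nd_sub_intCast]
    simp only [f, ballIndicator, sub_sub_cancel, ite_zero_mul_ite_zero, one_mul]
  calc ∫ t in (0 : ℝ)..1, f t = ∫ t in (b - 1 / 2)..(b + 1 / 2), f t := by
        convert hf.intervalIntegral_add_eq 0 (b - 1 / 2) using 2 <;> ring
    _ = ∫ u in -(1 / 2)..(1 / 2), f (b - u) := by
        rw [intervalIntegral.integral_comp_sub_left f b]; norm_num
    _ = max (2 * r - nd (a - b)) 0 := by
        simp_rw [hshift]
        exact integral_overlap_of_abs_le_half (abs_sub_round _) hr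

lemma sum_product_self_eq_sum_filter_ne_add_sum_diag {M α : Type*} [AddCommMonoid M]
    [DecidableEq α] (s : Finset α) (f : α × α → M) :
    ∑ p ∈ s ×ˢ s, f p = ∑ p ∈ (s ×ˢ s).filter (fun p => p.1 ≠ p.2), f p + ∑ i ∈ s, f (i, i) := by
  rw [← sum_filter_add_sum_filter_not (s ×ˢ s) (fun p => p.1 ≠ p.2), ← sum_diag]
  congr 2
  ext ⟨i, j⟩
  simp only [mem_filter, mem_product, not_ne_iff, mem_diag]
  constructor
  · rintro ⟨⟨h, -⟩, rfl⟩; exact ⟨h, rfl⟩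
  · rintro ⟨h, rfl⟩; exact ⟨⟨h, h⟩, rfl⟩

lemma Fb_sq (x : ℕ → ℝ) (β t s : ℝ) (N : ℕ) :
    Fb x β t s N ^ 2 = (∑ p ∈ Icc 1 N ×ˢ Icc 1 N,
      ballIndicator (s / (2 * (N : ℝ) ^ β)) (x p.1) t *
        ballIndicator (s / (2 * (N : ℝ) ^ β)) (x p.2) t) / ((N : ℝ) ^ (1 - β)) ^ 2 := by
  rw [Fb, div_pow, card_filter]
  push_cast
  rw [sq, sum_mul_sum, ← sum_product']
  rfl

theorem stmt1_general (x : ℕ → ℝ)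
    (β : ℝ) (s : ℝ) (hs : 0 < s) (N : ℕ) (hN : 1 ≤ N)
    (hsmall : 2 * s ≤ (N : ℝ) ^ β) :
    ∫ t in (0:ℝ)..1, (Fb x β t s N) ^ 2
      = s * (N : ℝ) ^ (β - 2) *
          ∑ p ∈ (Finset.Icc 1 N ×ˢ Finset.Icc 1 N).filter (fun p => p.1 ≠ p.2),
            max (1 - nd (x p.1 - x p.2) * (N : ℝ) ^ β / s) 0
        + s * (N : ℝ) ^ (β - 1) := by
  have hN0 : (0 : ℝ) < N := by exact_mod_cast hN
  set A := (N : ℝ) ^ β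
  have hA0 : 0 < A := Real.rpow_pos_of_pos hN0 β
  set r := s / (2 * A) with hr_def
  have hr : r ≤ 1 / 4 := by
    rw [div_le_iff₀ (by positivity)]; linarith
  have hpow : ∀ k : ℝ, (N : ℝ) ^ (β - k) = A / (N : ℝ) ^ k := fun k => Real.rpow_sub hN0 β k
  have hmax : ∀ d : ℝ, max (2 * r - d) 0 = s / A * max (1 - d * A / s) 0 := fun d => by
    rw [mul_max_of_nonneg _ _ (by positivity), mul_zero]
    congr 1
    rw [hr_def]
    field_simp
  simp_rw [Fb_sq]
  rw [intervalIntegral.integral_div, intervalIntegral.integral_finsetSum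
      fun p _ => intervalIntegrable_ballIndicator_mul r _ _ 0 1]
  simp_rw [integral_ballIndicator_mul r _ _ hr]
  rw [sum_product_self_eq_sum_filter_ne_add_sum_diag]
  simp only [sub_self, nd_zero, sub_zero, max_eq_left (by positivity : 0 ≤ 2 * r), sum_const,
    Nat.card_Icc, add_tsub_cancel_right, nsmul_eq_mul, hmax, ← mul_sum]
  rw [hpow, hpow, Real.rpow_sub hN0, Real.rpow_one, Real.rpow_two, hr_def]
  field_simp
  ring

theorem stmt1 (x : ℕ → ℝ) (hx : ∀ n, x n ∈ Set.Icc (0:ℝ) 1)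
    (β : ℝ) (hβ0 : 0 ≤ β) (hβ1 : β ≤ 1) (s : ℝ) (hs : 0 < s) (N : ℕ) (hN : 1 ≤ N)
    (hsmall : 2 * s ≤ (N : ℝ) ^ β) :
    ∫ t in (0:ℝ)..1, (Fb x β t s N) ^ 2
      = s * (N : ℝ) ^ (β - 2) *
          ∑ p ∈ (Finset.Icc 1 N ×ˢ Finset.Icc 1 N).filter (fun p => p.1 ≠ p.2),
            max (1 - nd (x p.1 - x p.2) * (N : ℝ) ^ β / s) 0
        + s * (N : ℝ) ^ (β - 1) :=
  stmt1_general x β s hs N hN hsmall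
end

section
/- Let 0 ≤ β ≤ 1 and s₀ > 0. A sequence (x_n) in [0,1] satisfies lim_{N→∞} R₂(β;s,N) = 2s for all s < s₀ if and only if lim_{N→∞} (1/s)∫₀ˢ R₂(β;σ,N) dσ = s for all s < s₀. -/
open Finset Filter MeasureTheory
open scoped Classical

/-!
Everything rests on `σ ↦ R₂(β;σ,N)` being nonnegative and nondecreasing. If these functions
converge pointwise on `(0, s₀)`, then on `[0, s]` they are squeezed between `0` and their
convergent values at `s`, so dominated convergence passes the limit under the integral.
Conversely, the slope of the primitive of a nondecreasing function between `s` and `t` lies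
between its values at `s` and `t`; so `R₂(β;s,N)` is squeezed between slopes of
`σ ↦ ∫₀^σ R₂` to the left and to the right of `s`, whose limits are slopes of `s ↦ s²`
and hence approach `2s`.
-/

open Topology

section Monotone

variable {f : ℝ → ℝ}

theorem Monotone.le_slope_intervalIntegral (hf : Monotone f) (a : ℝ) {s t : ℝ} (hst : s < t) :
    f s ≤ slope (fun u => ∫ σ in a..u, f σ) s t := by
  rw [slope_def_field, intervalIntegral.integral_interval_sub_left hf.intervalIntegrable
    hf.intervalIntegrable, le_div_iff₀ (sub_pos.2 hst)]
  calc f s * (t - s) = ∫ _ in s..t, f s := by simp [mul_comm]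
    _ ≤ ∫ σ in s..t, f σ := intervalIntegral.integral_mono_on hst.le intervalIntegrable_const
        hf.intervalIntegrable fun σ hσ => hf hσ.1

theorem Monotone.slope_intervalIntegral_le (hf : Monotone f) (a : ℝ) {s t : ℝ} (hst : s < t) :
    slope (fun u => ∫ σ in a..u, f σ) s t ≤ f t := by
  rw [slope_def_field, intervalIntegral.integral_interval_sub_left hf.intervalIntegrable
    hf.intervalIntegrable, div_le_iff₀ (sub_pos.2 hst)]
  calc ∫ σ in s..t, f σ ≤ ∫ _ in s..t, f t := intervalIntegral.integral_mono_on hst.le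
        hf.intervalIntegrable intervalIntegrable_const fun σ hσ => hf hσ.2
    _ = f t * (t - s) := by simp [mul_comm]

end Monotone

section Convergence

variable {ι : Type*} {l : Filter ι} {f : ι → ℝ → ℝ}

theorem tendsto_intervalIntegral_of_monotone [l.IsCountablyGenerated] {g : ℝ → ℝ}
    (hf : ∀ i, Monotone (f i)) (hf₀ : ∀ i σ, 0 ≤ f i σ) {a s : ℝ} (has : a < s)
    (h : ∀ σ ∈ Set.Ioc a s, Tendsto (fun i => f i σ) l (𝓝 (g σ))) :
    Tendsto (fun i => ∫ σ in a..s, f i σ) l (𝓝 (∫ σ in a..s, g σ)) := by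
  have hbound : ∀ᶠ i in l, f i s ≤ g s + 1 :=
    ((h s ⟨has, le_rfl⟩).eventually (gt_mem_nhds (lt_add_one _))).mono fun _ => le_of_lt
  refine intervalIntegral.tendsto_integral_filter_of_dominated_convergence (fun _ => g s + 1)
    (.of_forall fun i => (hf i).measurable.aestronglyMeasurable) ?_ intervalIntegrable_const
    (.of_forall fun σ hσ => h σ (by rwa [Set.uIoc_of_le has.le] at hσ))
  filter_upwards [hbound] with i hi
  refine .of_forall fun σ hσ => ?_
  rw [Set.uIoc_of_le has.le] at hσ
  rw [Real.norm_of_nonneg (hf₀ i σ)]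
  exact (hf i hσ.2).trans hi

theorem tendsto_of_tendsto_intervalIntegral_of_monotone {G : ℝ → ℝ} {L a s : ℝ}
    (hf : ∀ i, Monotone (f i))
    (h : ∀ᶠ t in 𝓝 s, Tendsto (fun i => ∫ σ in a..t, f i σ) l (𝓝 (G t)))
    (hG : HasDerivAt G L s) :
    Tendsto (fun i => f i s) l (𝓝 L) := by
  have hslope (t : ℝ) (ht : Tendsto (fun i => ∫ σ in a..t, f i σ) l (𝓝 (G t))) :
      Tendsto (fun i => slope (fun u => ∫ σ in a..u, f i σ) s t) l (𝓝 (slope G s t)) := by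
    simp only [slope_def_field]
    exact (ht.sub h.self_of_nhds).div_const _
  obtain ⟨hleft, hright⟩ := hasDerivAt_iff_tendsto_slope_left_right.1 hG
  refine tendsto_order.2 ⟨fun b hb => ?_, fun b hb => ?_⟩
  · obtain ⟨t, ⟨hts, ht⟩, hGt⟩ :=
      ((eventually_mem_nhdsWithin.and (nhdsWithin_le_nhds h)).and
        (hleft.eventually (lt_mem_nhds hb))).exists
    filter_upwards [(hslope t ht).eventually (lt_mem_nhds hGt)] with i hi
    rw [slope_comm] at hi
    exact hi.trans_le ((hf i).slope_intervalIntegral_le a hts)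
  · obtain ⟨t, ⟨hts, ht⟩, hGt⟩ :=
      ((eventually_mem_nhdsWithin.and (nhdsWithin_le_nhds h)).and
        (hright.eventually (gt_mem_nhds hb))).exists
    filter_upwards [(hslope t ht).eventually (gt_mem_nhds hGt)] with i hi
    exact ((hf i).le_slope_intervalIntegral a hts).trans_lt hi

end Convergence

theorem monotone_R2 (x : ℕ → ℝ) (β : ℝ) (N : ℕ) : Monotone (fun σ => R2 x β σ N) := by
  intro a b hab
  have hr : a / (N : ℝ) ^ β ≤ b / (N : ℝ) ^ β := by gcongr
  have hcount : pairCount x N (a / (N : ℝ) ^ β) ≤ pairCount x N (b / (N : ℝ) ^ β) :=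
    Finset.card_le_card <| Finset.monotone_filter_right _ fun _ _ hp => ⟨hp.1, hp.2.trans hr⟩
  show R2 x β a N ≤ R2 x β b N
  unfold R2
  gcongr

theorem R2_nonneg (x : ℕ → ℝ) (β σ : ℝ) (N : ℕ) : 0 ≤ R2 x β σ N := by
  unfold R2; positivity

theorem stmt2_general (x : ℕ → ℝ)
    (β : ℝ) (s₀ : ℝ) :
    (∀ s : ℝ, 0 < s → s < s₀ →
        Tendsto (fun N => R2 x β s N) atTop (nhds (2 * s)))
    ↔ (∀ s : ℝ, 0 < s → s < s₀ →
        Tendsto (fun N : ℕ => (1/s) * ∫ σ in (0:ℝ)..s, R2 x β σ N) atTop (nhds s)) := by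
  constructor
  · intro h s hs hss
    have hint := tendsto_intervalIntegral_of_monotone (monotone_R2 x β)
      (fun N σ => R2_nonneg x β σ N) hs fun σ hσ => h σ hσ.1 (hσ.2.trans_lt hss)
    have hval : ∫ σ in (0:ℝ)..s, 2 * σ = s ^ 2 := by
      rw [intervalIntegral.integral_const_mul, integral_id]; ring
    convert hint.const_mul (1 / s) using 2
    rw [hval]; field_simp
  · intro h s hs hss
    refine tendsto_of_tendsto_intervalIntegral_of_monotone (G := fun t => t ^ 2) (a := 0)
      (monotone_R2 x β) ?_ (by simpa using hasDerivAt_pow 2 s)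
    filter_upwards [Ioo_mem_nhds hs hss] with t ht
    have ht₀ : t ≠ 0 := ht.1.ne'
    convert (h t ht.1 ht.2).const_mul t using 2
    · field_simp
    · ring

theorem stmt2 (x : ℕ → ℝ) (hx : ∀ n, x n ∈ Set.Icc (0:ℝ) 1)
    (β : ℝ) (hβ0 : 0 ≤ β) (hβ1 : β ≤ 1) (s₀ : ℝ) (hs₀ : 0 < s₀) :
    (∀ s : ℝ, 0 < s → s < s₀ →
        Tendsto (fun N => R2 x β s N) atTop (nhds (2 * s)))
    ↔ (∀ s : ℝ, 0 < s → s < s₀ →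
        Tendsto (fun N : ℕ => (1/s) * ∫ σ in (0:ℝ)..s, R2 x β σ N) atTop (nhds s)) :=
  stmt2_general x β s₀
end

section
/- If a sequence (x_n) in [0,1] is uniformly distributed modulo 1, then it has Poissonian 0-pair correlations, i.e. lim_{N→∞} N^{−2} · #{m ≠ n ≤ N : ‖x_m − x_n‖ ≤ s} = 2s for all 0 < s ≤ 1/2. -/
/-!
Since `‖u‖ ≤ s ↔ fract (u + s) ≤ 2s`, the pairs `(m, n)` with `‖x_m - x_n‖ ≤ s`, together with
the `N` diagonal pairs, are counted by summing over `n` the number of `x_m` on the arc of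
`ℝ ⧸ ℤ` of length `2s` starting at `x_n - s`. So it suffices that the number of points on an arc
of length `ℓ` is `ℓN + o(N)` uniformly in the arc: if every such error is at most `D_N · N`,
then `|R₂(0;s,N) - 2s| ≤ D_N + 1/N`.
Approximating intervals from inside by intervals with endpoints on a grid of mesh `1/K` turns
uniform distribution into lower bounds uniform over all intervals of `[0,1]`. An arc contains one
or two such intervals of total length almost `ℓ`, which bounds its count from below; the upper
bound is the lower bound for the complementary arc.
-/

open Finset Filter MeasureTheory
open scoped Classical

lemma Int.fract_le_of_le_add {v ℓ : ℝ} {k : ℤ} (hk : (k : ℝ) ≤ v) (hv : v ≤ k + ℓ) :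
    Int.fract v ≤ ℓ := by
  have : (k : ℝ) ≤ ⌊v⌋ := by exact_mod_cast Int.le_floor.2 hk
  rw [Int.fract]
  linarith

lemma Int.fract_sub_le_of_mem_Icc {y c ℓ : ℝ} (m : ℤ)
    (hy : y ∈ Set.Icc (Int.fract c + m) (Int.fract c + m + ℓ)) : Int.fract (y - c) ≤ ℓ := by
  rw [Int.fract] at hy
  exact Int.fract_le_of_le_add (k := m - ⌊c⌋) (by push_cast; linarith [hy.1])
    (by push_cast; linarith [hy.2])

lemma Int.lt_fract_sub_of_fract_le {v ℓ ε : ℝ} (hε : 0 < ε) (h : Int.fract v ≤ ℓ) :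
    1 - ℓ - 2 * ε < Int.fract (v - ℓ - ε) := by
  by_contra! h'
  rw [Int.fract] at h h'
  have hv := Int.floor_le v
  have hv' := Int.floor_le (v - ℓ - ε)
  have hlt : ⌊v - ℓ - ε⌋ < ⌊v⌋ := by exact_mod_cast (show (⌊v - ℓ - ε⌋ : ℝ) < ⌊v⌋ by linarith)
  have : (⌊v - ℓ - ε⌋ : ℝ) + 1 ≤ ⌊v⌋ := by exact_mod_cast hlt
  linarith

lemma nd_le_iff_fract_add_le {u s : ℝ} : nd u ≤ s ↔ Int.fract (u + s) ≤ 2 * s := by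
  constructor
  · intro h
    have h' := abs_le.1 h
    exact Int.fract_le_of_le_add (k := round u) (by linarith) (by linarith)
  · intro h
    have h0 := Int.fract_nonneg (u + s)
    rw [Int.fract] at h h0
    exact (round_le u ⌊u + s⌋).trans (abs_le.2 ⟨by linarith, by linarith⟩)

lemma eventually_mul_le_of_tendsto_div {f : ℕ → ℝ} {L L' : ℝ}
    (hf : Tendsto (fun N : ℕ => f N / N) atTop (nhds L)) (hL : L' < L) :
    ∀ᶠ N : ℕ in atTop, L' * N ≤ f N := by
  filter_upwards [hf.eventually (eventually_gt_nhds hL), eventually_gt_atTop 0] with N hN hN0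
  exact ((lt_div_iff₀ (by exact_mod_cast hN0)).1 hN).le

noncomputable def intervalCount (x : ℕ → ℝ) (N : ℕ) (a b : ℝ) : ℕ :=
  #{i ∈ Icc 1 N | x i ∈ Set.Icc a b}

lemma UnifDist.eventually_intervalCount_ge {x : ℕ → ℝ} (h : UnifDist x) {ε : ℝ} (hε : 0 < ε) :
    ∀ᶠ N in atTop, ∀ a b : ℝ, 0 ≤ a → b ≤ 1 →
      (b - a - ε) * N ≤ intervalCount x N a b := by
  obtain ⟨K, hK⟩ := exists_nat_gt (4 / ε)
  have hK0 : (0 : ℝ) < K := (by positivity : (0 : ℝ) < 4 / ε).trans hK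
  have h2K : 2 / (K : ℝ) < ε / 2 := by
    rw [div_lt_iff₀ hK0]; rw [div_lt_iff₀ hε] at hK; linarith
  have hgrid : ∀ᶠ N in atTop, ∀ q ∈ (range (K + 1) ×ˢ range (K + 1)).filter (fun q => q.1 < q.2),
      ((q.2 / K : ℝ) - q.1 / K - ε / 2) * N ≤ intervalCount x N (q.1 / K) (q.2 / K) := by
    refine (eventually_all_finset _).2 fun ⟨j, k⟩ hq => ?_
    simp only [mem_filter, mem_product, mem_range] at hq
    have hjk : (j : ℝ) < k := by exact_mod_cast hq.2
    have hkK : (k : ℝ) ≤ K := by exact_mod_cast Nat.lt_succ_iff.1 hq.1.2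
    exact eventually_mul_le_of_tendsto_div
      (h _ _ (by positivity) (div_lt_div_of_pos_right hjk hK0) (div_le_one_of_le₀ hkK hK0.le))
      (by linarith)
  filter_upwards [hgrid] with N hN a b ha hb
  set j := ⌈a * K⌉₊
  set k := ⌊b * K⌋₊
  have hj : (j : ℝ) < a * K + 1 := Nat.ceil_lt_add_one (by positivity)
  have hk : b * K < k + 1 := Nat.lt_floor_add_one _
  rcases lt_or_ge j k with hjk | hkj
  · have hbK : 0 ≤ b * K := zero_le_one.trans (Nat.floor_pos.1 ((Nat.zero_le j).trans_lt hjk))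
    have hkK : k ≤ K := Nat.floor_le_of_le (by nlinarith)
    have hsub : Set.Icc ((j : ℝ) / K) (k / K) ⊆ Set.Icc a b := Set.Icc_subset_Icc
      ((le_div_iff₀ hK0).2 (Nat.le_ceil _)) ((div_le_iff₀ hK0).2 (Nat.floor_le hbK))
    have hgap : b - a - ε ≤ (k : ℝ) / K - j / K - ε / 2 := by
      have : b - a - 2 / K < (k : ℝ) / K - j / K := by
        rw [← sub_div, lt_div_iff₀ hK0, sub_mul, sub_mul, div_mul_cancel₀ _ hK0.ne']; linarith
      linarith
    calc (b - a - ε) * N ≤ ((k : ℝ) / K - j / K - ε / 2) * N := by gcongr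
      _ ≤ intervalCount x N (j / K) (k / K) :=
        hN (j, k) (by simp only [mem_filter, mem_product, mem_range]; omega)
      _ ≤ intervalCount x N a b := by
        exact_mod_cast card_le_card (monotone_filter_right _ fun i _ hi => hsub hi)
  · have hkj' : (k : ℝ) ≤ j := by exact_mod_cast hkj
    have hshort : b - a < 2 / K := by
      rw [lt_div_iff₀ hK0]; linarith
    have hneg : b - a - ε ≤ 0 := by linarith
    exact (mul_nonpos_of_nonpos_of_nonneg hneg N.cast_nonneg).trans (Nat.cast_nonneg _)

/-- `Int.fract (y - c) ≤ ℓ` says that `y` lies on the arc `[c, c + ℓ]` of `ℝ ⧸ ℤ`. -/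
noncomputable def arcCount (x : ℕ → ℝ) (N : ℕ) (c ℓ : ℝ) : ℕ :=
  #{i ∈ Icc 1 N | Int.fract (x i - c) ≤ ℓ}

lemma arcCount_add_arcCount_le (x : ℕ → ℝ) (N : ℕ) (c : ℝ) {ℓ ε : ℝ} (hε : 0 < ε) :
    arcCount x N c ℓ + arcCount x N (c + ℓ + ε) (1 - ℓ - 2 * ε) ≤ N := by
  rw [arcCount, arcCount, ← card_union_of_disjoint]
  · calc _ ≤ #(Icc 1 N) := card_le_card (union_subset (filter_subset _ _) (filter_subset _ _))
      _ = N := by simp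
  · refine disjoint_filter.2 fun i _ hi => not_le.2 ?_
    simpa only [sub_add_eq_sub_sub] using Int.lt_fract_sub_of_fract_le hε hi

lemma UnifDist.eventually_arcCount_ge {x : ℕ → ℝ} (h : UnifDist x) {ε : ℝ} (hε : 0 < ε) :
    ∀ᶠ N in atTop, ∀ c ℓ : ℝ, ℓ ≤ 1 → (ℓ - 3 * ε) * N ≤ arcCount x N c ℓ := by
  filter_upwards [h.eventually_intervalCount_ge hε] with N hN c ℓ hℓ
  set c' := Int.fract c
  have hc0 : 0 ≤ c' := Int.fract_nonneg c
  have hc1 : c' < 1 := Int.fract_lt_one c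
  -- the `- ε` keeps the two intervals disjoint when `ℓ = 1`
  have hsplit : (intervalCount x N c' (min (c' + ℓ) 1) : ℝ) +
      intervalCount x N 0 (c' + ℓ - 1 - ε) ≤ arcCount x N c ℓ := by
    rw [← Nat.cast_add, Nat.cast_le, intervalCount, intervalCount, arcCount,
      ← card_union_of_disjoint]
    · refine card_le_card (union_subset ?_ ?_) <;>
        refine monotone_filter_right _ fun i _ hi => ?_
      · exact Int.fract_sub_le_of_mem_Icc 0
          ⟨by simpa using hi.1, by simpa using hi.2.trans (min_le_left _ _)⟩
      · exact Int.fract_sub_le_of_mem_Icc (-1)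
          ⟨by push_cast; linarith [hi.1], by push_cast; linarith [hi.2]⟩
    · exact disjoint_filter.2 fun i _ hi hi' => by linarith [hi.1, hi'.2]
  have h1 := hN c' (min (c' + ℓ) 1) hc0 (min_le_right _ _)
  have h2 := hN 0 (c' + ℓ - 1 - ε) le_rfl (by linarith)
  have hN0 : (0 : ℝ) ≤ N := N.cast_nonneg
  rcases min_cases (c' + ℓ) 1 with ⟨hm, -⟩ | ⟨hm, -⟩ <;> rw [hm] at h1 hsplit
  · nlinarith [Nat.cast_nonneg (α := ℝ) (intervalCount x N 0 (c' + ℓ - 1 - ε))]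
  · linarith

lemma UnifDist.eventually_abs_arcCount_sub_le {x : ℕ → ℝ} (h : UnifDist x) {ε : ℝ}
    (hε : 0 < ε) : ∀ᶠ N in atTop, ∀ c ℓ : ℝ, 0 ≤ ℓ → ℓ ≤ 1 →
      |(arcCount x N c ℓ : ℝ) - ℓ * N| ≤ ε * N := by
  filter_upwards [h.eventually_arcCount_ge (ε := ε / 5) (by positivity)] with N hN c ℓ hℓ0 hℓ1
  have hlow := hN c ℓ hℓ1
  have hcompl := hN (c + ℓ + ε / 5) (1 - ℓ - 2 * (ε / 5)) (by linarith)
  have hsum : (arcCount x N c ℓ : ℝ) + arcCount x N (c + ℓ + ε / 5) (1 - ℓ - 2 * (ε / 5)) ≤ N := by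
    exact_mod_cast arcCount_add_arcCount_le x N c (ℓ := ℓ) (by positivity)
  have hN0 : (0 : ℝ) ≤ N := N.cast_nonneg
  rw [abs_le]
  constructor <;> nlinarith

lemma pairCount_add_eq_sum_arcCount (x : ℕ → ℝ) (N : ℕ) {s : ℝ} (hs : 0 ≤ s) :
    pairCount x N s + N = ∑ n ∈ Icc 1 N, arcCount x N (x n - s) (2 * s) := by
  set S := Icc 1 N
  have hfib : ∑ n ∈ S, arcCount x N (x n - s) (2 * s) = #{p ∈ S ×ˢ S | nd (x p.1 - x p.2) ≤ s} := by
    rw [card_filter, sum_product_right]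
    refine sum_congr rfl fun n _ => ?_
    rw [arcCount, card_filter]
    refine sum_congr rfl fun m _ => ?_
    simp only [nd_le_iff_fract_add_le, sub_sub_eq_add_sub, add_sub_right_comm]
  have hsplit := card_filter_add_card_filter_not (s := {p ∈ S ×ˢ S | nd (x p.1 - x p.2) ≤ s})
    (fun p => p.1 ≠ p.2)
  rw [filter_filter, filter_filter] at hsplit
  have hpair : {p ∈ S ×ˢ S | nd (x p.1 - x p.2) ≤ s ∧ p.1 ≠ p.2} =
      {p ∈ S ×ˢ S | p.1 ≠ p.2 ∧ nd (x p.1 - x p.2) ≤ s} := filter_congr fun _ _ => and_comm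
  have hdiag : {p ∈ S ×ˢ S | nd (x p.1 - x p.2) ≤ s ∧ ¬p.1 ≠ p.2} = S.diag := by
    ext p
    simp only [mem_filter, mem_diag, mem_product, not_not]
    constructor
    · rintro ⟨⟨h1, -⟩, -, he⟩
      exact ⟨h1, he⟩
    · rintro ⟨h1, he⟩
      refine ⟨⟨h1, he ▸ h1⟩, ?_, he⟩
      simpa [he, nd] using hs
  rw [hfib, ← hsplit, hpair, hdiag, diag_card, Nat.card_Icc, Nat.add_sub_cancel, pairCount]

lemma abs_pairCount_add_sub_le {x : ℕ → ℝ} {N : ℕ} {s δ : ℝ} (hs : 0 ≤ s)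
    (hD : ∀ c : ℝ, |(arcCount x N c (2 * s) : ℝ) - 2 * s * N| ≤ δ * N) :
    |(pairCount x N s : ℝ) + N - 2 * s * N ^ 2| ≤ δ * N ^ 2 := by
  have hsum : (pairCount x N s : ℝ) + N = ∑ n ∈ Icc 1 N, (arcCount x N (x n - s) (2 * s) : ℝ) := by
    exact_mod_cast pairCount_add_eq_sum_arcCount x N hs
  calc |(pairCount x N s : ℝ) + N - 2 * s * N ^ 2|
      = |∑ n ∈ Icc 1 N, ((arcCount x N (x n - s) (2 * s) : ℝ) - 2 * s * N)| := by
        rw [hsum, sum_sub_distrib, sum_const, Nat.card_Icc, Nat.add_sub_cancel, nsmul_eq_mul]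
        congr 2
        ring
    _ ≤ ∑ n ∈ Icc 1 N, |(arcCount x N (x n - s) (2 * s) : ℝ) - 2 * s * N| :=
        abs_sum_le_sum_abs _ _
    _ ≤ ∑ n ∈ Icc 1 N, δ * N := sum_le_sum fun n _ => hD _
    _ = δ * N ^ 2 := by
        rw [sum_const, Nat.card_Icc, Nat.add_sub_cancel, nsmul_eq_mul]
        ring

lemma abs_pairCount_div_sub_le {x : ℕ → ℝ} {N : ℕ} {s δ : ℝ} (hs : 0 ≤ s) (hN : 0 < N)
    (hD : ∀ c : ℝ, |(arcCount x N c (2 * s) : ℝ) - 2 * s * N| ≤ δ * N) :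
    |(pairCount x N s : ℝ) / N ^ 2 - 2 * s| ≤ δ + 1 / N := by
  have hN' : (0 : ℝ) < N := Nat.cast_pos.2 hN
  have hN2 : (0 : ℝ) < N ^ 2 := pow_pos hN' 2
  have hsplit : (pairCount x N s : ℝ) / N ^ 2 - 2 * s =
      ((pairCount x N s : ℝ) + N - 2 * s * N ^ 2) / N ^ 2 - 1 / N := by
    field_simp
    ring
  calc |(pairCount x N s : ℝ) / N ^ 2 - 2 * s|
      ≤ |(pairCount x N s : ℝ) + N - 2 * s * N ^ 2| / N ^ 2 + 1 / (N : ℝ) := by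
        rw [hsplit]
        refine (abs_sub _ _).trans_eq ?_
        rw [abs_div, abs_of_pos hN2, abs_of_pos (one_div_pos.2 hN')]
    _ ≤ δ + 1 / (N : ℝ) := by
        gcongr
        exact (div_le_iff₀ hN2).2 (abs_pairCount_add_sub_le hs hD)

theorem stmt3_general (x : ℕ → ℝ) (h : UnifDist x) :
    ∀ s : ℝ, 0 < s → s ≤ 1/2 →
      Tendsto (fun N : ℕ => (pairCount x N s : ℝ) / (N : ℝ) ^ 2) atTop (nhds (2 * s)) := by
  intro s hs hs2
  refine Metric.tendsto_nhds.2 fun ε hε => ?_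
  filter_upwards [h.eventually_abs_arcCount_sub_le (half_pos hε),
    tendsto_one_div_atTop_nhds_zero_nat.eventually (gt_mem_nhds (half_pos hε)),
    eventually_gt_atTop 0] with N hD hN hN0
  have hpair := abs_pairCount_div_sub_le hs.le hN0
    fun c => hD c (2 * s) (by positivity) (by linarith)
  rw [Real.dist_eq]
  linarith

theorem stmt3 (x : ℕ → ℝ) (hx : ∀ n, x n ∈ Set.Icc (0:ℝ) 1) (h : UnifDist x) :
    ∀ s : ℝ, 0 < s → s ≤ 1/2 →
      Tendsto (fun N : ℕ => (pairCount x N s : ℝ) / (N : ℝ) ^ 2) atTop (nhds (2 * s)) :=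
  stmt3_general x h
end

section
/- Let (Y_n) be a sequence of i.i.d. random variables uniformly distributed on [0,1]. Then almost surely, lim_{N→∞} N^{−1}·#{n ≤ N : Y_n ≥ 1 − s/N}·#{n ≤ N : Y_n ≤ s/N} = 0 for every s > 0. -/
/-!
Write `A_N` and `B_N` for the numbers of `n ≤ N` with `Y_n ≥ 1 - s/N` and with `Y_n ≤ s/N`.
Expanding `A_N B_N` as a sum over pairs, pairwise independence bounds its mean by
`N² (s/N)² + N (s/N) = s² + s`, so `E(s, N) = A_N B_N / N` has mean `O(1/N)`. Along the squares
these means are summable, hence `∑ₖ E(s, k²) < ∞` almost surely and `E(s, k²) → 0`. Both counts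
are monotone in `N` and in the threshold, so for `K² ≤ N < (K+1)²` we get
`E(s, N) ≤ 4 E(4⌈s⌉, (K+1)²)`, and countably many integer parameters cover every `s`.
-/


open Finset Filter MeasureTheory
open scoped Classical

open scoped ENNReal

section Counting

variable {Ω ι β : Type*} [MeasurableSpace Ω] [MeasurableSpace β] {μ : Measure Ω} {Y : ι → Ω → β}

/-- Off the diagonal independence gives `a * b`; a diagonal pair only costs `b`. -/
lemma lintegral_sum_indicator_mul_sum_indicator_le (hmeas : ∀ n, Measurable (Y n))
    (hindep : ProbabilityTheory.iIndepFun Y μ) {S T : Set β} (hS : MeasurableSet S)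
    (hT : MeasurableSet T) {a b : ℝ≥0∞} (ha : ∀ n, μ (Y n ⁻¹' S) ≤ a)
    (hb : ∀ n, μ (Y n ⁻¹' T) ≤ b) (I : Finset ι) :
    ∫⁻ ω, (∑ m ∈ I, S.indicator 1 (Y m ω)) * (∑ n ∈ I, T.indicator 1 (Y n ω)) ∂μ
      ≤ #I * #I * (a * b) + #I * b := by
  have hpair : ∀ m n, μ (Y m ⁻¹' S ∩ Y n ⁻¹' T) ≤ a * b + if m = n then b else 0 := by
    intro m n
    by_cases hmn : m = n
    · simp only [hmn, if_true]
      exact (measure_mono Set.inter_subset_right).trans ((hb n).trans le_add_self)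
    · rw [if_neg hmn, add_zero, (hindep.indepFun hmn).measure_inter_preimage_eq_mul _ _ hS hT]
      exact mul_le_mul' (ha m) (hb n)
  have hprod : ∀ m n ω, S.indicator (1 : β → ℝ≥0∞) (Y m ω) * T.indicator 1 (Y n ω)
      = (Y m ⁻¹' S ∩ Y n ⁻¹' T).indicator 1 ω := by
    intro m n ω
    simp only [Set.indicator_apply, Set.mem_inter_iff, Set.mem_preimage, Pi.one_apply,
      ite_zero_mul_ite_zero, mul_one]
  have hind : ∀ m n, Measurable ((Y m ⁻¹' S ∩ Y n ⁻¹' T).indicator (1 : Ω → ℝ≥0∞)) :=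
    fun m n => measurable_one.indicator ((hmeas m hS).inter (hmeas n hT))
  simp_rw [Finset.sum_mul_sum, hprod]
  rw [lintegral_finsetSum _ fun m _ => Finset.measurable_sum _ fun n _ => hind m n]
  calc ∑ m ∈ I, ∫⁻ ω, ∑ n ∈ I, (Y m ⁻¹' S ∩ Y n ⁻¹' T).indicator 1 ω ∂μ
      = ∑ m ∈ I, ∑ n ∈ I, μ (Y m ⁻¹' S ∩ Y n ⁻¹' T) := by
        refine Finset.sum_congr rfl fun m _ => ?_
        rw [lintegral_finsetSum _ fun n _ => hind m n]
        exact Finset.sum_congr rfl fun n _ =>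
          lintegral_indicator_one ((hmeas m hS).inter (hmeas n hT))
    _ ≤ ∑ m ∈ I, ∑ n ∈ I, (a * b + if m = n then b else 0) :=
        Finset.sum_le_sum fun m _ => Finset.sum_le_sum fun n _ => hpair m n
    _ = #I * #I * (a * b) + #I * b := by
        simp [Finset.sum_add_distrib, Finset.sum_ite_eq, mul_assoc]

end Counting

lemma measure_preimage_le_of_map_eq_uniform {Ω : Type*} [MeasurableSpace Ω] {μ : Measure Ω}
    {X : Ω → ℝ} (hX : Measurable X) (hlaw : μ.map X = volume.restrict (Set.Icc 0 1))
    {S : Set ℝ} (hS : MeasurableSet S) {a b : ℝ} (hsub : S ∩ Set.Icc 0 1 ⊆ Set.Icc a b) :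
    μ (X ⁻¹' S) ≤ ENNReal.ofReal (b - a) := by
  rw [← Measure.map_apply hX hS, hlaw, Measure.restrict_apply hS, ← Real.volume_Icc]
  exact measure_mono hsub

lemma ae_tendsto_zero_of_tsum_lintegral_ne_top {α : Type*} [MeasurableSpace α] {μ : Measure α}
    {f : ℕ → α → ℝ≥0∞} (hf : ∀ k, AEMeasurable (f k) μ) (h : ∑' k, ∫⁻ x, f k x ∂μ ≠ ∞) :
    ∀ᵐ x ∂μ, Tendsto (fun k => f k x) atTop (nhds 0) := by
  rw [← lintegral_tsum hf] at h
  filter_upwards [ae_lt_top' (AEMeasurable.tsum hf) h] with x hx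
  exact ENNReal.tendsto_atTop_zero_of_tsum_ne_top hx.ne

noncomputable def endpointError (x : ℕ → ℝ) (s : ℝ) (N : ℕ) : ℝ :=
  ((#{n ∈ Icc 1 N | 1 - s / N ≤ x n} : ℝ) * #{n ∈ Icc 1 N | x n ≤ s / N}) / N

lemma endpointError_nonneg (x : ℕ → ℝ) (s : ℝ) (N : ℕ) : 0 ≤ endpointError x s N := by
  unfold endpointError; positivity

lemma endpointError_le_of_le (x : ℕ → ℝ) {s t C : ℝ} {N M : ℕ} (hN : 0 < N) (hNM : N ≤ M)
    (hMN : (M : ℝ) ≤ C * N) (hst : s / N ≤ t / M) :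
    endpointError x s N ≤ C * endpointError x t M := by
  have hN' : (0 : ℝ) < N := by exact_mod_cast hN
  have hM' : (0 : ℝ) < M := by exact_mod_cast hN.trans_le hNM
  have hA : #{n ∈ Icc 1 N | 1 - s / N ≤ x n} ≤ #{n ∈ Icc 1 M | 1 - t / M ≤ x n} :=
    card_le_card fun n hn => by
      simp only [mem_filter, mem_Icc] at hn ⊢
      exact ⟨⟨hn.1.1, hn.1.2.trans hNM⟩, by linarith [hn.2]⟩
  have hB : #{n ∈ Icc 1 N | x n ≤ s / N} ≤ #{n ∈ Icc 1 M | x n ≤ t / M} :=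
    card_le_card fun n hn => by
      simp only [mem_filter, mem_Icc] at hn ⊢
      exact ⟨⟨hn.1.1, hn.1.2.trans hNM⟩, by linarith [hn.2]⟩
  unfold endpointError
  set P : ℝ := (#{n ∈ Icc 1 M | 1 - t / M ≤ x n} : ℝ) * #{n ∈ Icc 1 M | x n ≤ t / M} with hP
  calc _ ≤ P / N :=
        div_le_div_of_nonneg_right (by rw [hP]; exact_mod_cast Nat.mul_le_mul hA hB) hN'.le
    _ = P / M * (M / N) := by field_simp
    _ ≤ P / M * C := by gcongr; rwa [div_le_iff₀ hN']
    _ = C * (P / M) := mul_comm _ _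

lemma tendsto_endpointError_of_tendsto_squares {x : ℕ → ℝ}
    (h : ∀ m : ℕ, Tendsto (fun k => endpointError x m ((k + 1) ^ 2)) atTop (nhds 0))
    (s : ℝ) : Tendsto (endpointError x s) atTop (nhds 0) := by
  have hsqrt : Tendsto Nat.sqrt atTop atTop :=
    tendsto_atTop_atTop.2 fun K => ⟨K ^ 2, fun N hN => Nat.le_sqrt'.2 hN⟩
  have hlim := ((h (4 * ⌈s⌉₊)).comp hsqrt).const_mul 4
  rw [mul_zero] at hlim
  refine squeeze_zero' (Eventually.of_forall fun N => endpointError_nonneg x s N) ?_ hlim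
  filter_upwards [eventually_ge_atTop 1] with N hN
  -- `K² ≤ N < (K + 1)² ≤ 4N` for `K = ⌊√N⌋`
  have hK : 1 ≤ Nat.sqrt N := Nat.le_sqrt'.2 (by simpa using hN)
  have hKN : ((Nat.sqrt N : ℝ) + 1) ^ 2 ≤ 4 * N := by
    have h1 : ((Nat.sqrt N : ℝ)) ^ 2 ≤ N := by exact_mod_cast Nat.sqrt_le' N
    have h2 : (1 : ℝ) ≤ Nat.sqrt N := by exact_mod_cast hK
    nlinarith
  refine endpointError_le_of_le x hN (Nat.lt_succ_sqrt' N).le (by push_cast; exact hKN) ?_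
  have hceil : s ≤ ⌈s⌉₊ := Nat.le_ceil s
  have hN' : (0 : ℝ) < N := by exact_mod_cast hN
  rw [div_le_div_iff₀ hN' (by positivity)]
  push_cast
  nlinarith

section Uniform

variable {Ω : Type*} [MeasurableSpace Ω] {μ : Measure Ω} {Y : ℕ → Ω → ℝ}

lemma ofReal_endpointError (x : ℕ → ℝ) (s : ℝ) {N : ℕ} (hN : 0 < N) :
    ENNReal.ofReal (endpointError x s N) =
      (∑ n ∈ Icc 1 N, (Set.Ici (1 - s / N)).indicator 1 (x n)) *
        (∑ n ∈ Icc 1 N, (Set.Iic (s / N)).indicator 1 (x n)) / N := by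
  rw [endpointError, ENNReal.ofReal_div_of_pos (by exact_mod_cast hN),
    ENNReal.ofReal_mul (by positivity), ENNReal.ofReal_natCast, ENNReal.ofReal_natCast,
    ENNReal.ofReal_natCast, card_filter, card_filter]
  push_cast
  simp only [Set.indicator_apply, Set.mem_Ici, Set.mem_Iic, Pi.one_apply]

lemma measurable_endpointError (hmeas : ∀ n, Measurable (Y n)) (s : ℝ) {N : ℕ} (hN : 0 < N) :
    Measurable fun ω => ENNReal.ofReal (endpointError (Y · ω) s N) := by
  simp_rw [ofReal_endpointError _ s hN]
  refine (Measurable.mul ?_ ?_).div_const _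
  · exact Finset.measurable_sum _ fun m _ =>
      (measurable_one.indicator measurableSet_Ici).comp (hmeas m)
  · exact Finset.measurable_sum _ fun n _ =>
      (measurable_one.indicator measurableSet_Iic).comp (hmeas n)

lemma lintegral_endpointError_le (hmeas : ∀ n, Measurable (Y n))
    (hindep : ProbabilityTheory.iIndepFun Y μ)
    (hunif : ∀ n, μ.map (Y n) = volume.restrict (Set.Icc 0 1)) {s : ℝ} (hs : 0 ≤ s)
    {N : ℕ} (hN : 0 < N) :
    ∫⁻ ω, ENNReal.ofReal (endpointError (Y · ω) s N) ∂μ ≤ ENNReal.ofReal ((s ^ 2 + s) / N) := by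
  have hN' : (0 : ℝ) < N := by exact_mod_cast hN
  have hc : 0 ≤ s / N := by positivity
  have hupper : ∀ n, μ (Y n ⁻¹' Set.Ici (1 - s / N)) ≤ ENNReal.ofReal (s / N) := fun n => by
    simpa using measure_preimage_le_of_map_eq_uniform (hmeas n) (hunif n) measurableSet_Ici
      (a := 1 - s / N) (b := 1) fun y hy => ⟨hy.1, hy.2.2⟩
  have hlower : ∀ n, μ (Y n ⁻¹' Set.Iic (s / N)) ≤ ENNReal.ofReal (s / N) := fun n => by
    simpa using measure_preimage_le_of_map_eq_uniform (hmeas n) (hunif n) measurableSet_Iic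
      (a := 0) (b := s / N) fun y hy => ⟨hy.2.1, hy.1⟩
  simp_rw [ofReal_endpointError _ s hN, div_eq_mul_inv]
  rw [lintegral_mul_const' _ _ (by simpa using hN.ne')]
  calc _ ≤ ((#(Icc 1 N) : ℝ≥0∞) * #(Icc 1 N) * (ENNReal.ofReal (s / N) * ENNReal.ofReal (s / N))
          + #(Icc 1 N) * ENNReal.ofReal (s / N)) * (N : ℝ≥0∞)⁻¹ := by
        gcongr
        exact lintegral_sum_indicator_mul_sum_indicator_le hmeas hindep measurableSet_Ici
          measurableSet_Iic hupper hlower _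
    _ = ENNReal.ofReal ((s ^ 2 + s) / N) := by
        rw [Nat.card_Icc, Nat.add_sub_cancel, ← ENNReal.ofReal_natCast,
          ← ENNReal.ofReal_mul (q := N) hN'.le, ← ENNReal.ofReal_mul (q := s / N) hc,
          ← ENNReal.ofReal_mul (p := N * N) (by positivity),
          ← ENNReal.ofReal_mul (q := s / N) hN'.le,
          ← ENNReal.ofReal_add (by positivity) (by positivity), ← ENNReal.ofReal_inv_of_pos hN',
          ← ENNReal.ofReal_mul (by positivity)]
        congr 1
        field_simp

lemma ae_tendsto_endpointError_squares (hmeas : ∀ n, Measurable (Y n))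
    (hindep : ProbabilityTheory.iIndepFun Y μ)
    (hunif : ∀ n, μ.map (Y n) = volume.restrict (Set.Icc 0 1)) {s : ℝ} (hs : 0 ≤ s) :
    ∀ᵐ ω ∂μ, Tendsto (fun k => endpointError (Y · ω) s ((k + 1) ^ 2)) atTop (nhds 0) := by
  have hsummable : Summable fun k : ℕ => (s ^ 2 + s) / (((k + 1) ^ 2 : ℕ) : ℝ) := by
    refine (((summable_nat_add_iff 1).2 (Real.summable_one_div_nat_pow.2 one_lt_two)).mul_left
      (s ^ 2 + s)).congr fun k => ?_
    push_cast
    ring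
  have hsum : ∑' k, ∫⁻ ω, ENNReal.ofReal (endpointError (Y · ω) s ((k + 1) ^ 2)) ∂μ ≠ ∞ := by
    refine ne_top_of_le_ne_top ?_ (ENNReal.tsum_le_tsum fun k =>
      lintegral_endpointError_le hmeas hindep hunif hs (pow_pos k.succ_pos 2))
    rw [← ENNReal.ofReal_tsum_of_nonneg (fun k => by positivity) hsummable]
    exact ENNReal.ofReal_ne_top
  have hmeas' (k : ℕ) :=
    (measurable_endpointError hmeas s (pow_pos k.succ_pos 2)).aemeasurable (μ := μ)
  filter_upwards [ae_tendsto_zero_of_tsum_lintegral_ne_top hmeas' hsum] with ω hω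
  have := (ENNReal.tendsto_toReal ENNReal.zero_ne_top).comp hω
  simpa only [Function.comp_def, ENNReal.toReal_ofReal (endpointError_nonneg _ _ _),
    ENNReal.toReal_zero] using this

end Uniform

theorem stmt10_general {Ω : Type*} [MeasurableSpace Ω] (μ : Measure Ω)
    (Y : ℕ → Ω → ℝ)
    (hmeas : ∀ n, Measurable (Y n))
    (hindep : ProbabilityTheory.iIndepFun Y μ)
    (hunif : ∀ n, μ.map (Y n) = volume.restrict (Set.Icc (0:ℝ) 1)) :
    ∀ᵐ ω ∂μ, ∀ s : ℝ, 0 < s →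
      Tendsto (fun N : ℕ =>
        ((((Finset.Icc 1 N).filter (fun n => 1 - s / N ≤ Y n ω)).card : ℝ) *
          (((Finset.Icc 1 N).filter (fun n => Y n ω ≤ s / N)).card : ℝ)) / N)
        atTop (nhds 0) := by
  have h := ae_all_iff.2 fun m : ℕ =>
    ae_tendsto_endpointError_squares hmeas hindep hunif (Nat.cast_nonneg (α := ℝ) m)
  filter_upwards [h] with ω hω s _
  exact tendsto_endpointError_of_tendsto_squares hω s

theorem stmt10 {Ω : Type*} [MeasurableSpace Ω] (μ : Measure Ω)
    [IsProbabilityMeasure μ] (Y : ℕ → Ω → ℝ)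
    (hmeas : ∀ n, Measurable (Y n))
    (hindep : ProbabilityTheory.iIndepFun Y μ)
    (hunif : ∀ n, μ.map (Y n) = volume.restrict (Set.Icc (0:ℝ) 1)) :
    ∀ᵐ ω ∂μ, ∀ s : ℝ, 0 < s →
      Tendsto (fun N : ℕ =>
        ((((Finset.Icc 1 N).filter (fun n => 1 - s / N ≤ Y n ω)).card : ℝ) *
          (((Finset.Icc 1 N).filter (fun n => Y n ω ≤ s / N)).card : ℝ)) / N)
        atTop (nhds 0) :=
  stmt10_general μ Y hmeas hindep hunif
end

section
/- Let (y_n) be a sequence in [0,1] with distinct terms, 0 < β < 1, and define A_N = N·⌊N^{1/β−1}⌋. Define (x_n) by the block construction: each N ∈ (A_M, A_{M+1}] is written uniquely as N = A_M + ε_N·⌊M^{1/β−1}⌋ + q_N(M+1) + r_N with ε_N ∈ {0,1}, 1 ≤ r_N ≤ M+1, and x_N = y_{M+1} if ε_N = 0, x_N = y_{r_N} otherwise. Then for every M ≥ 1 and every k ∈ {1,...,M}: #{1 ≤ n ≤ A_M : x_n = y_k} = ⌊M^{1/β−1}⌋. -/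
/-!
Write `c M = ⌊M ^ (1/β - 1)⌋₊`, so that `A M = M * c M`. Since `β < 1`, `c` is monotone, and the
block `(A M, A (M+1)]` splits as `c M` copies of `y (M+1)` followed by `c (M+1) - c M` full periods
`y 1, …, y (M+1)`. By injectivity of `y`, the block therefore contains `c (M+1) - c M` occurrences
of each `y k` with `k ≤ M`, exactly `c (M+1)` occurrences of `y (M+1)` and none of the other values,
so by induction on `M` each of `y 1, …, y M` occurs exactly `c M` times among `x 1, …, x (A M)`.
-/

open Finset Filter MeasureTheory
open scoped Classical

section Occurrences

variable {α : Type*}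

noncomputable def occurrences (x : ℕ → α) (v : α) (a b : ℕ) : ℕ :=
  #{n ∈ Ioc a b | x n = v}

variable {x y : ℕ → α}

theorem occurrences_add_occurrences (v : α) {a b c : ℕ} (hab : a ≤ b) (hbc : b ≤ c) :
    occurrences x v a b + occurrences x v b c = occurrences x v a c := by
  simp only [occurrences, card_filter]
  exact sum_Ioc_consecutive _ hab hbc

theorem occurrences_of_forall_eq {w : α} (v : α) {a b : ℕ}
    (hx : ∀ n ∈ Ioc a b, x n = w) :
    occurrences x v a b = if v = w then b - a else 0 := by
  unfold occurrences
  split_ifs with hvw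
  · rw [filter_true_of_mem (fun n hn => (hx n hn).trans hvw.symm), Nat.card_Ioc]
  · exact card_eq_zero.2 (filter_false_of_mem fun n hn hxn => hvw (hxn.symm.trans (hx n hn)))

theorem occurrences_one_period (hy : Function.Injective y) (k : ℕ) {P m : ℕ}
    (hx : ∀ r ∈ Icc 1 m, x (P + r) = y r) :
    occurrences x (y k) P (P + m) = if k ∈ Icc 1 m then 1 else 0 := by
  have hfilter : {r ∈ Ioc 0 m | x (P + r) = y k} = {r ∈ Ioc 0 m | r = k} :=
    filter_congr fun r hr => by
      rw [← Icc_add_one_left_eq_Ioc, zero_add] at hr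
      rw [hx r hr, hy.eq_iff]
  have hshift : Ioc P (P + m) = (Ioc 0 m).map (addLeftEmbedding P) := by simp
  rw [occurrences, hshift, filter_map, card_map]
  simp only [Function.comp_def, addLeftEmbedding_apply]
  rw [hfilter, filter_eq', ← Icc_add_one_left_eq_Ioc, zero_add]
  split_ifs <;> rfl

theorem occurrences_periodic (hy : Function.Injective y) (k : ℕ) {B m : ℕ} (D : ℕ)
    (hx : ∀ q < D, ∀ r ∈ Icc 1 m, x (B + q * m + r) = y r) :
    occurrences x (y k) B (B + D * m) = if k ∈ Icc 1 m then D else 0 := by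
  induction D with
  | zero => simp [occurrences]
  | succ D ih =>
    rw [← occurrences_add_occurrences _ (Nat.le_add_right B (D * m))
      (Nat.add_le_add_left (Nat.mul_le_mul_right m (Nat.le_add_right D 1)) B),
      ih fun q hq => hx q (by omega), add_mul, one_mul, ← add_assoc,
      occurrences_one_period hy k (hx D D.lt_succ_self)]
    split_ifs <;> rfl

end Occurrences

structure IsBlockSequence {α : Type*} (c : ℕ → ℕ) (y x : ℕ → α) : Prop where
  apply_one : x 1 = y 1
  head : ∀ M ≥ 1, ∀ n ∈ Ioc (M * c M) (M * c M + c M), x n = y (M + 1)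
  tail : ∀ M ≥ 1, ∀ q < c (M + 1) - c M, ∀ r ∈ Icc 1 (M + 1),
    x (M * c M + c M + q * (M + 1) + r) = y r

theorem block_end_eq {c : ℕ → ℕ} {M : ℕ} (hc : c M ≤ c (M + 1)) :
    M * c M + c M + (c (M + 1) - c M) * (M + 1) = (M + 1) * c (M + 1) := by
  obtain ⟨d, hd⟩ := Nat.exists_eq_add_of_le hc
  rw [hd, Nat.add_sub_cancel_left]
  ring

section BlockSequence

variable {α : Type*} {c : ℕ → ℕ} {x y : ℕ → α}

theorem isBlockSequence_of_decomposition (hc : Monotone c) (hx1 : x 1 = y 1)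
    (hx : ∀ M N ε q r : ℕ, 1 ≤ M → M * c M < N → N ≤ (M + 1) * c (M + 1) →
      ε ≤ 1 → 1 ≤ r → r ≤ M + 1 →
      N = M * c M + ε * c M + q * (M + 1) + r →
      (ε = 0 ↔ N ≤ M * c M + c M) →
      x N = if ε = 0 then y (M + 1) else y r) :
    IsBlockSequence c y x where
  apply_one := hx1
  head M hM n hn := by
    obtain ⟨hlo, hhi⟩ := mem_Ioc.1 hn
    have hend := block_end_eq (hc M.le_succ)
    set t := n - M * c M - 1 with ht
    have hdiv := Nat.div_add_mod' t (M + 1)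
    have hmod : t % (M + 1) < M + 1 := Nat.mod_lt t M.succ_pos
    simpa using hx M n 0 (t / (M + 1)) (t % (M + 1) + 1) hM hlo (by omega) zero_le_one
      (by omega) (by omega) (by omega) (iff_of_true rfl hhi)
  tail M hM q hq r hr := by
    obtain ⟨hr1, hr2⟩ := mem_Icc.1 hr
    have hend := block_end_eq (hc M.le_succ)
    have hqr : (q + 1) * (M + 1) ≤ (c (M + 1) - c M) * (M + 1) := Nat.mul_le_mul_right _ hq
    rw [Nat.succ_mul] at hqr
    simpa using hx M _ 1 q r hM (by omega) (by omega) le_rfl hr1 hr2 (by ring)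
      (iff_of_false one_ne_zero (by omega))

theorem IsBlockSequence.occurrences_block (hx : IsBlockSequence c y x) (hy : Function.Injective y)
    (hc : Monotone c) {M : ℕ} (hM : 1 ≤ M) (k : ℕ) :
    occurrences x (y k) (M * c M) ((M + 1) * c (M + 1)) =
      (if k = M + 1 then c M else 0) + if k ∈ Icc 1 (M + 1) then c (M + 1) - c M else 0 := by
  rw [← block_end_eq (hc M.le_succ), ← occurrences_add_occurrences _ (Nat.le_add_right _ _)
      (Nat.le_add_right _ _), occurrences_of_forall_eq _ (hx.head M hM),
    occurrences_periodic hy k _ (hx.tail M hM), hy.eq_iff, Nat.add_sub_cancel_left]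
  -- the two sides differ only in the `Decidable` instance of the first `if`
  congr

theorem IsBlockSequence.occurrences_eq (hx : IsBlockSequence c y x) (hy : Function.Injective y)
    (hc : Monotone c) (hc1 : c 1 = 1) {M : ℕ} (hM : 1 ≤ M) (k : ℕ) :
    occurrences x (y k) 0 (M * c M) = if k ∈ Icc 1 M then c M else 0 := by
  induction M, hM using Nat.le_induction with
  | base =>
    have hx1 : ∀ n ∈ Ioc 0 1, x n = y 1 := fun n hn => by
      obtain rfl : n = 1 := by simpa using hn
      exact hx.apply_one
    rw [hc1, occurrences_of_forall_eq _ hx1, hy.eq_iff]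
    simp
  | succ M hM ih =>
    have hcM : c M ≤ c (M + 1) := hc M.le_succ
    have hle : M * c M ≤ (M + 1) * c (M + 1) := Nat.mul_le_mul M.le_succ hcM
    rw [← occurrences_add_occurrences _ (Nat.zero_le _) hle, ih, hx.occurrences_block hy hc hM]
    simp only [mem_Icc]
    split_ifs <;> omega

end BlockSequence

theorem stmt12 (β : ℝ) (hβ0 : 0 < β) (hβ1 : β < 1)
    (y : ℕ → ℝ) (hy : Function.Injective y)
    (A : ℕ → ℕ) (hA : ∀ N, A N = N * ⌊(N : ℝ) ^ (1/β - 1)⌋₊)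
    (x : ℕ → ℝ) (hx1 : x 1 = y 1)
    (hx : ∀ M N ε q r : ℕ, 1 ≤ M → A M < N → N ≤ A (M+1) →
      ε ≤ 1 → 1 ≤ r → r ≤ M + 1 →
      N = A M + ε * ⌊(M : ℝ) ^ (1/β - 1)⌋₊ + q * (M+1) + r →
      (ε = 0 ↔ N ≤ A M + ⌊(M : ℝ) ^ (1/β - 1)⌋₊) →
      x N = if ε = 0 then y (M+1) else y r) :
    ∀ M k : ℕ, 1 ≤ M → 1 ≤ k → k ≤ M →
      ((Finset.Icc 1 (A M)).filter (fun n => x n = y k)).card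
        = ⌊(M : ℝ) ^ (1/β - 1)⌋₊ := by
  have hexp : 0 ≤ 1 / β - 1 := sub_nonneg.2 (one_le_one_div hβ0 hβ1.le)
  have hc : Monotone fun N : ℕ => ⌊(N : ℝ) ^ (1 / β - 1)⌋₊ := fun a b hab =>
    Nat.floor_le_floor (Real.rpow_le_rpow (Nat.cast_nonneg a) (Nat.cast_le.2 hab) hexp)
  have hc1 : ⌊((1 : ℕ) : ℝ) ^ (1 / β - 1)⌋₊ = 1 := by simp
  simp only [hA] at hx
  intro M k hM hk1 hk2
  rw [hA, show Icc 1 _ = Ioc 0 _ from Icc_add_one_left_eq_Ioc 0 _]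
  exact ((isBlockSequence_of_decomposition hc hx1 hx).occurrences_eq hy hc hc1 hM k).trans
    (if_pos (mem_Icc.2 ⟨hk1, hk2⟩))
end
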